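/- Let X be a real Banach space containing a complemented isomorphic copy of ℓ₁. Then there exists a nonempty bounded closed convex set K ⊆ B_X that is a Lipschitz retract of B_X and admits a uniformly Lipschitz fixed-point-free map F : K → K with d(F,K) = 0. -/

import Mathlib

open Metric Set

open scoped lp

/-! In `ℓ¹` the map `T x = (1 - ‖x‖, x₀, x₁, …)` sends the unit ball into the unit sphere, on
which it is the right shift, an isometry; hence all iterates of `T` are `2`-Lipschitz on the ball.
A fixed point of `T` would have norm `1`, first coordinate `0` and all coordinates equal, which is
impossible, while the averages `(e₀ + ⋯ + eₙ₋₁) / n` are moved by only `2 / n`.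
A complemented copy of `ℓ¹` yields an embedding `f` with a bounded linear left inverse `π`,
rescaled so that `‖f‖ ≤ 1`. Then `K = f(B_ℓ¹)` carries `f ∘ T ∘ π`, which is conjugate to `T`,
and `f ∘ ρ ∘ π` retracts `X` onto `K`, where `ρ` is the radial retraction onto `B_ℓ¹`. -/

section LeftInverse

variable {E X : Type*} [NormedAddCommGroup E] [NormedSpace ℝ E] [NormedAddCommGroup X]
  [NormedSpace ℝ X]

lemma exists_leftInverse_of_range_eq_range_idempotent {f : E →L[ℝ] X} {c : ℝ} (hc : 0 < c)
    (hbelow : ∀ u, c * ‖u‖ ≤ ‖f u‖) {P : X →L[ℝ] X} (hP : ∀ y, P (P y) = P y)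
    (hrange : range P = range f) : ∃ π : X →L[ℝ] E, Function.LeftInverse π f := by
  have hbound : ∀ u, ‖u‖ ≤ c⁻¹ * ‖f u‖ := fun u => by
    rw [inv_mul_eq_div, le_div_iff₀' hc]; exact hbelow u
  have hinj : Function.Injective f :=
    (AddMonoidHomClass.antilipschitz_of_bound f (K := ⟨c⁻¹, by positivity⟩) hbound).injective
  let e := (LinearEquiv.ofInjective f.toLinearMap hinj).toContinuousLinearEquivOfBounds ‖f‖ c⁻¹
    (fun u => f.le_opNorm u) fun y => (hbound _).trans_eq
      (congrArg (c⁻¹ * ‖·‖) (LinearEquiv.ofInjective_symm_apply (f := f.toLinearMap) y))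
  have hPf : ∀ u, P (f u) = f u := fun u => by
    obtain ⟨y, hy⟩ : f u ∈ range P := hrange ▸ mem_range_self u
    rw [← hy, hP]
  have hPrange : ∀ y, P y ∈ LinearMap.range f.toLinearMap := fun y => by
    obtain ⟨u, hu⟩ : P y ∈ range f := hrange ▸ mem_range_self y
    exact ⟨u, hu⟩
  exact ⟨(e.symm : LinearMap.range f.toLinearMap →L[ℝ] E).comp (P.codRestrict _ hPrange),
    fun u => e.symm_apply_eq.mpr (Subtype.ext (hPf u))⟩

lemma exists_leftInverse_opNorm_le_one {f : E →L[ℝ] X} {π : X →L[ℝ] E}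
    (hπ : Function.LeftInverse π f) :
    ∃ (f' : E →L[ℝ] X) (π' : X →L[ℝ] E), ‖f'‖ ≤ 1 ∧ Function.LeftInverse π' f' := by
  have hpos : 0 < 1 + ‖f‖ := by positivity
  refine ⟨(1 + ‖f‖)⁻¹ • f, (1 + ‖f‖) • π, ?_, fun u => ?_⟩
  · rw [norm_smul, Real.norm_of_nonneg (inv_pos.mpr hpos).le, inv_mul_le_one₀ hpos]
    linarith
  · simp [hπ u, hpos.ne']

end LeftInverse

section RadialRetraction

variable {E : Type*} [NormedAddCommGroup E] [NormedSpace ℝ E]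

noncomputable def radialRetraction (x : E) : E := (max ‖x‖ 1)⁻¹ • x

lemma norm_radialRetraction_le (x : E) : ‖radialRetraction x‖ ≤ 1 := by
  have hpos : 0 < max ‖x‖ 1 := lt_max_of_lt_right one_pos
  rw [radialRetraction, norm_smul, Real.norm_of_nonneg (inv_pos.mpr hpos).le,
    inv_mul_le_one₀ hpos]
  exact le_max_left _ _

lemma radialRetraction_of_norm_le_one {x : E} (hx : ‖x‖ ≤ 1) : radialRetraction x = x := by
  rw [radialRetraction, max_eq_right hx, inv_one, one_smul]

lemma norm_radialRetraction_sub_le (x y : E) :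
    ‖radialRetraction x - radialRetraction y‖ ≤ 2 * ‖x - y‖ := by
  set a := max ‖x‖ 1
  set b := max ‖y‖ 1
  have ha : 1 ≤ a := le_max_right _ _
  have hb : 1 ≤ b := le_max_right _ _
  have ha0 : 0 < a := one_pos.trans_le ha
  have hb0 : 0 < b := one_pos.trans_le hb
  have hab : |b - a| ≤ ‖x - y‖ := by
    rw [abs_sub_comm]
    exact (abs_max_sub_max_le_abs _ _ _).trans (abs_norm_sub_norm_le x y)
  have hsplit : radialRetraction x - radialRetraction y = a⁻¹ • (x - y) + (a⁻¹ - b⁻¹) • y := by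
    simp only [radialRetraction, smul_sub, sub_smul]; abel
  -- `‖y‖ ≤ b` absorbs the factor `b` in `|a⁻¹ - b⁻¹| = |b - a| / (a * b)`
  have hsecond : |a⁻¹ - b⁻¹| * ‖y‖ ≤ ‖x - y‖ := calc
    |a⁻¹ - b⁻¹| * ‖y‖ ≤ |b - a| / (a * b) * b := by
      rw [inv_sub_inv ha0.ne' hb0.ne', abs_div, abs_of_pos (mul_pos ha0 hb0)]
      gcongr
      exact le_max_left _ _
    _ = |b - a| / a := by field_simp
    _ ≤ ‖x - y‖ := (div_le_self (abs_nonneg _) ha).trans hab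
  calc ‖radialRetraction x - radialRetraction y‖
      ≤ a⁻¹ * ‖x - y‖ + |a⁻¹ - b⁻¹| * ‖y‖ := by
        rw [hsplit]
        refine (norm_add_le _ _).trans_eq ?_
        rw [norm_smul, norm_smul, Real.norm_of_nonneg (inv_pos.mpr ha0).le, Real.norm_eq_abs]
    _ ≤ 1 * ‖x - y‖ + ‖x - y‖ := by
        gcongr
        exact inv_le_one_of_one_le₀ ha
    _ = 2 * ‖x - y‖ := by ring

end RadialRetraction

section Conjugation

variable {E X : Type*} [NormedAddCommGroup E] [NormedSpace ℝ E] [NormedAddCommGroup X]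
  [NormedSpace ℝ X] {f : E →L[ℝ] X} {π : X →L[ℝ] E}

lemma norm_sub_le_opNorm_mul_of_leftInverse (hπ : Function.LeftInverse π f) (a b : E) :
    ‖a - b‖ ≤ ‖π‖ * ‖f a - f b‖ := by
  simpa only [map_sub, hπ a, hπ b] using π.le_opNorm (f a - f b)

lemma norm_map_sub_le_of_opNorm_le_one (hf : ‖f‖ ≤ 1) (a b : E) : ‖f a - f b‖ ≤ ‖a - b‖ := by
  simpa only [map_sub, one_mul] using f.le_of_opNorm_le hf (a - b)

lemma image_closedBall_subset_closedBall (hf : ‖f‖ ≤ 1) :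
    f '' closedBall 0 1 ⊆ closedBall 0 1 := by
  rintro _ ⟨x, hx, rfl⟩
  rw [mem_closedBall_zero_iff] at hx ⊢
  exact (f.le_of_opNorm_le hf x).trans (by simpa using hx)

lemma exists_retraction_onto_image_closedBall (hf : ‖f‖ ≤ 1) (hπ : Function.LeftInverse π f) :
    ∃ R : X → X, (∀ y, R y ∈ f '' closedBall 0 1) ∧ (∀ y ∈ f '' closedBall 0 1, R y = y) ∧
      ∀ y z, ‖R y - R z‖ ≤ 2 * ‖π‖ * ‖y - z‖ := by
  refine ⟨f ∘ radialRetraction ∘ π,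
    fun y => mem_image_of_mem f (mem_closedBall_zero_iff.2 (norm_radialRetraction_le _)), ?_,
    fun y z => ?_⟩
  · rintro _ ⟨x, hx, rfl⟩
    simp [hπ x, radialRetraction_of_norm_le_one (mem_closedBall_zero_iff.1 hx)]
  · calc ‖f (radialRetraction (π y)) - f (radialRetraction (π z))‖
        ≤ ‖radialRetraction (π y) - radialRetraction (π z)‖ :=
          norm_map_sub_le_of_opNorm_le_one hf _ _
      _ ≤ 2 * ‖π y - π z‖ := norm_radialRetraction_sub_le _ _
      _ ≤ 2 * (‖π‖ * ‖y - z‖) := by rw [← map_sub]; gcongr; exact π.le_opNorm _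
      _ = 2 * ‖π‖ * ‖y - z‖ := by ring

lemma semiconj_comp_comp_of_leftInverse (hπ : Function.LeftInverse π f) (T : E → E) :
    Function.Semiconj f T (f ∘ T ∘ π) :=
  fun x => by simp [hπ x]

variable {T : E → E}

lemma mapsTo_comp_comp_image (hπ : Function.LeftInverse π f) {s t : Set E}
    (hT : MapsTo T s t) : MapsTo (f ∘ T ∘ π) (f '' s) (f '' t) := by
  rintro _ ⟨x, hx, rfl⟩
  exact ⟨T x, hT hx, semiconj_comp_comp_of_leftInverse hπ T x⟩

lemma comp_comp_apply_ne_self (hπ : Function.LeftInverse π f) {s : Set E}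
    (hT : ∀ x ∈ s, T x ≠ x) : ∀ y ∈ f '' s, (f ∘ T ∘ π) y ≠ y := by
  rintro _ ⟨x, hx, rfl⟩ hfix
  exact hT x hx (hπ.injective ((semiconj_comp_comp_of_leftInverse hπ T x).trans hfix))

lemma norm_iterate_comp_comp_sub_le (hf : ‖f‖ ≤ 1) (hπ : Function.LeftInverse π f) {s : Set E}
    {L : ℝ} (hL : 0 ≤ L) (hT : ∀ n, ∀ x ∈ s, ∀ x' ∈ s, ‖T^[n] x - T^[n] x'‖ ≤ L * ‖x - x'‖)
    (n : ℕ) : ∀ y ∈ f '' s, ∀ y' ∈ f '' s,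
      ‖(f ∘ T ∘ π)^[n] y - (f ∘ T ∘ π)^[n] y'‖ ≤ L * ‖π‖ * ‖y - y'‖ := by
  rintro _ ⟨x, hx, rfl⟩ _ ⟨x', hx', rfl⟩
  have hiter := (semiconj_comp_comp_of_leftInverse hπ T).iterate_right n
  calc ‖(f ∘ T ∘ π)^[n] (f x) - (f ∘ T ∘ π)^[n] (f x')‖ = ‖f (T^[n] x) - f (T^[n] x')‖ := by
        rw [hiter x, hiter x']
    _ ≤ ‖T^[n] x - T^[n] x'‖ := norm_map_sub_le_of_opNorm_le_one hf _ _
    _ ≤ L * ‖x - x'‖ := hT n x hx x' hx'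
    _ ≤ L * (‖π‖ * ‖f x - f x'‖) := by
        gcongr; exact norm_sub_le_opNorm_mul_of_leftInverse hπ x x'
    _ = L * ‖π‖ * ‖f x - f x'‖ := by ring

lemma exists_norm_sub_comp_comp_lt (hf : ‖f‖ ≤ 1) (hπ : Function.LeftInverse π f) {s : Set E}
    (hT : ∀ δ > 0, ∃ x ∈ s, ‖x - T x‖ < δ) : ∀ δ > 0, ∃ y ∈ f '' s, ‖y - (f ∘ T ∘ π) y‖ < δ := by
  intro δ hδ
  obtain ⟨x, hx, hxδ⟩ := hT δ hδ
  refine ⟨f x, mem_image_of_mem f hx, ?_⟩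
  rw [← semiconj_comp_comp_of_leftInverse hπ T x]
  exact (norm_map_sub_le_of_opNorm_le_one hf _ _).trans_lt hxδ

end Conjugation

namespace L1

lemma hasSum_norm (x : ℓ¹(ℕ, ℝ)) : HasSum (fun i => ‖x i‖) ‖x‖ := by
  simpa using lp.hasSum_norm (p := 1) (by norm_num) x

def cons (a : ℝ) (x : ℓ¹(ℕ, ℝ)) : ℓ¹(ℕ, ℝ) :=
  ⟨fun i => Nat.casesOn i a x, memℓp_gen <| (summable_nat_add_iff 1).mp <| by
    simpa using (hasSum_norm x).summable⟩

@[simp] lemma cons_apply_zero (a : ℝ) (x : ℓ¹(ℕ, ℝ)) : cons a x 0 = a := rfl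

@[simp] lemma cons_apply_succ (a : ℝ) (x : ℓ¹(ℕ, ℝ)) (i : ℕ) : cons a x (i + 1) = x i := rfl

lemma norm_cons (a : ℝ) (x : ℓ¹(ℕ, ℝ)) : ‖cons a x‖ = |a| + ‖x‖ := by
  refine (hasSum_norm (cons a x)).unique ((hasSum_nat_add_iff' 1).mp ?_)
  simpa using hasSum_norm x

lemma cons_add_cons (a b : ℝ) (x y : ℓ¹(ℕ, ℝ)) : cons a x + cons b y = cons (a + b) (x + y) := by
  ext (_ | _) <;> rfl

lemma cons_sub_cons (a b : ℝ) (x y : ℓ¹(ℕ, ℝ)) : cons a x - cons b y = cons (a - b) (x - y) := by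
  ext (_ | _) <;> rfl

lemma cons_zero_single (i : ℕ) (a : ℝ) : cons 0 (lp.single 1 i a) = lp.single 1 (i + 1) a := by
  ext (_ | j)
  · simp [lp.single_apply]
  · simp [lp.single_apply, Pi.single_apply]

lemma cons_zero_sum_single (s : Finset ℕ) (a : ℝ) :
    cons 0 (∑ i ∈ s, lp.single 1 i a) = ∑ i ∈ s, lp.single 1 (i + 1) a := by
  induction s using Finset.induction_on with
  | empty => ext (_ | _) <;> rfl
  | insert i s hi ih =>
    rw [Finset.sum_insert hi, Finset.sum_insert hi, ← ih, ← cons_zero_single, cons_add_cons,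
      zero_add]

noncomputable def consOneSubNorm (x : ℓ¹(ℕ, ℝ)) : ℓ¹(ℕ, ℝ) := cons (1 - ‖x‖) x

lemma norm_consOneSubNorm_sub (x y : ℓ¹(ℕ, ℝ)) :
    ‖consOneSubNorm x - consOneSubNorm y‖ = |‖x‖ - ‖y‖| + ‖x - y‖ := by
  rw [consOneSubNorm, consOneSubNorm, cons_sub_cons, norm_cons, sub_sub_sub_cancel_left,
    abs_sub_comm]

lemma norm_consOneSubNorm {x : ℓ¹(ℕ, ℝ)} (hx : ‖x‖ ≤ 1) : ‖consOneSubNorm x‖ = 1 := by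
  rw [consOneSubNorm, norm_cons, abs_of_nonneg (sub_nonneg.mpr hx), sub_add_cancel]

lemma mapsTo_consOneSubNorm : MapsTo consOneSubNorm (closedBall 0 1) (closedBall 0 1) :=
  fun _ hx => mem_closedBall_zero_iff.2 (norm_consOneSubNorm (mem_closedBall_zero_iff.1 hx)).le

lemma consOneSubNorm_ne_self {x : ℓ¹(ℕ, ℝ)} (hx : x ∈ closedBall 0 1) : consOneSubNorm x ≠ x := by
  intro hfix
  have hnorm : ‖x‖ = 1 := hfix ▸ norm_consOneSubNorm (mem_closedBall_zero_iff.1 hx)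
  have hzero : ∀ i, x i = 0 := by
    intro i
    induction i with
    | zero => rw [← hfix, consOneSubNorm, cons_apply_zero, hnorm, sub_self]
    | succ i ih => rw [← hfix, consOneSubNorm, cons_apply_succ, ih]
  have : x = 0 := lp.ext (funext hzero)
  simp [this] at hnorm

lemma norm_iterate_consOneSubNorm_sub {x y : ℓ¹(ℕ, ℝ)} (hx : ‖x‖ = 1) (hy : ‖y‖ = 1) (n : ℕ) :
    ‖consOneSubNorm^[n] x - consOneSubNorm^[n] y‖ = ‖x - y‖ := by
  induction n generalizing x y with
  | zero => rfl
  | succ n ih =>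
    rw [Function.iterate_succ_apply, Function.iterate_succ_apply,
      ih (norm_consOneSubNorm hx.le) (norm_consOneSubNorm hy.le), norm_consOneSubNorm_sub, hx, hy,
      sub_self, abs_zero, zero_add]

lemma norm_iterate_consOneSubNorm_sub_le (n : ℕ) (x : ℓ¹(ℕ, ℝ)) (hx : x ∈ closedBall 0 1)
    (y : ℓ¹(ℕ, ℝ)) (hy : y ∈ closedBall 0 1) :
    ‖consOneSubNorm^[n] x - consOneSubNorm^[n] y‖ ≤ 2 * ‖x - y‖ := by
  rw [mem_closedBall_zero_iff] at hx hy
  cases n with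
  | zero => simp only [Function.iterate_zero, id]; linarith [norm_nonneg (x - y)]
  | succ n =>
    rw [Function.iterate_succ_apply, Function.iterate_succ_apply,
      norm_iterate_consOneSubNorm_sub (norm_consOneSubNorm hx) (norm_consOneSubNorm hy),
      norm_consOneSubNorm_sub]
    linarith [abs_norm_sub_norm_le x y]

noncomputable def uniformBlock (n : ℕ) : ℓ¹(ℕ, ℝ) := ∑ i ∈ Finset.range n, lp.single 1 i (n : ℝ)⁻¹

lemma norm_uniformBlock {n : ℕ} (hn : n ≠ 0) : ‖uniformBlock n‖ = 1 := by
  rw [uniformBlock]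
  simpa [hn] using lp.norm_sum_single (p := 1) (by norm_num) (fun _ => (n : ℝ)⁻¹) (Finset.range n)

lemma norm_uniformBlock_sub_consOneSubNorm_le {n : ℕ} (hn : n ≠ 0) :
    ‖uniformBlock n - consOneSubNorm (uniformBlock n)‖ ≤ 2 / n := by
  have htelescope : uniformBlock n - consOneSubNorm (uniformBlock n) =
      (lp.single 1 0 (n : ℝ)⁻¹ - lp.single 1 n (n : ℝ)⁻¹ : ℓ¹(ℕ, ℝ)) := by
    rw [consOneSubNorm, norm_uniformBlock hn, sub_self, uniformBlock, cons_zero_sum_single,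
      ← Finset.sum_sub_distrib, Finset.sum_range_sub']
  rw [htelescope]
  refine (norm_sub_le _ _).trans_eq ?_
  simp only [lp.norm_single one_pos, norm_inv, Real.norm_natCast]
  ring

lemma exists_norm_sub_consOneSubNorm_lt (δ : ℝ) (hδ : 0 < δ) :
    ∃ x ∈ closedBall (0 : ℓ¹(ℕ, ℝ)) 1, ‖x - consOneSubNorm x‖ < δ := by
  obtain ⟨n, hn⟩ := exists_nat_gt (2 / δ)
  have hn0 : (0 : ℝ) < n := (div_pos two_pos hδ).trans hn
  have hn0' : n ≠ 0 := (Nat.cast_pos.mp hn0).ne'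
  refine ⟨uniformBlock n, mem_closedBall_zero_iff.2 (norm_uniformBlock hn0').le, ?_⟩
  exact (norm_uniformBlock_sub_consOneSubNorm_le hn0').trans_lt
    ((div_lt_iff₀ hn0).mpr ((div_lt_iff₀' hδ).mp hn))

end L1

theorem statement10_general {X : Type*} [NormedAddCommGroup X] [NormedSpace ℝ X]
    (hl1 : ∃ (f : (lp (fun _ : ℕ => ℝ) 1) →L[ℝ] X) (c : ℝ) (P : X →L[ℝ] X),
      0 < c ∧ (∀ u : lp (fun _ : ℕ => ℝ) 1, c * ‖u‖ ≤ ‖f u‖) ∧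
      (∀ y : X, P (P y) = P y) ∧ Set.range P = Set.range f) :
    ∃ K : Set X,
      K.Nonempty ∧ Bornology.IsBounded K ∧ IsClosed K ∧ Convex ℝ K ∧
      K ⊆ Metric.closedBall (0 : X) 1 ∧
      (∃ R : X → X, Set.MapsTo R (Metric.closedBall (0 : X) 1) K ∧
        (∀ y ∈ K, R y = y) ∧
        ∃ L : ℝ, 0 ≤ L ∧ ∀ y ∈ Metric.closedBall (0 : X) 1,
          ∀ z ∈ Metric.closedBall (0 : X) 1, ‖R y - R z‖ ≤ L * ‖y - z‖) ∧
      (∃ F : X → X, Set.MapsTo F K K ∧ (∀ y ∈ K, F y ≠ y) ∧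
        (∃ L : ℝ, 0 ≤ L ∧ ∀ n : ℕ, ∀ y ∈ K, ∀ z ∈ K,
          ‖F^[n] y - F^[n] z‖ ≤ L * ‖y - z‖) ∧
        sInf ((fun y => ‖y - F y‖) '' K) = 0) := by
  obtain ⟨f₀, c, P, hc, hbelow, hP, hrange⟩ := hl1
  obtain ⟨π₀, hπ₀⟩ := exists_leftInverse_of_range_eq_range_idempotent hc hbelow hP hrange
  obtain ⟨f, π, hf, hπ⟩ := exists_leftInverse_opNorm_le_one hπ₀
  obtain ⟨R, hRK, hRfix, hRlip⟩ := exists_retraction_onto_image_closedBall hf hπ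
  have hKB := image_closedBall_subset_closedBall hf
  have hK : (f '' closedBall 0 1).Nonempty := (nonempty_closedBall.2 zero_le_one).image f
  have hdisp := exists_norm_sub_comp_comp_lt hf hπ L1.exists_norm_sub_consOneSubNorm_lt
  refine ⟨f '' closedBall 0 1, hK, isBounded_closedBall.subset hKB,
    (hπ.isClosedEmbedding π.continuous f.continuous).isClosedMap _ isClosed_closedBall,
    (convex_closedBall 0 1).linear_image f.toLinearMap, hKB,
    ⟨R, fun y _ => hRK y, hRfix, 2 * ‖π‖, by positivity, fun y _ z _ => hRlip y z⟩,
    ⟨f ∘ L1.consOneSubNorm ∘ π, mapsTo_comp_comp_image hπ L1.mapsTo_consOneSubNorm,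
      comp_comp_apply_ne_self hπ fun _ => L1.consOneSubNorm_ne_self,
      ⟨2 * ‖π‖, by positivity,
        norm_iterate_comp_comp_sub_le hf hπ zero_le_two L1.norm_iterate_consOneSubNorm_sub_le⟩,
      csInf_eq_of_forall_ge_of_forall_gt_exists_lt (hK.image _)
        (by rintro _ ⟨y, -, rfl⟩; exact norm_nonneg _) fun δ hδ => ?_⟩⟩
  obtain ⟨y, hy, hyδ⟩ := hdisp δ hδ
  exact ⟨_, mem_image_of_mem _ hy, hyδ⟩

/-- Let `X` be a real Banach space containing a complemented isomorphic
copy of `ℓ₁`.  Then there exists a nonempty bounded closed convex set `K ⊆ B_X` that is a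
Lipschitz retract of `B_X` and admits a uniformly Lipschitz fixed-point-free self-map with
null minimal displacement. -/
theorem statement10 {X : Type*} [NormedAddCommGroup X] [NormedSpace ℝ X] [CompleteSpace X]
    (hl1 : ∃ (f : (lp (fun _ : ℕ => ℝ) 1) →L[ℝ] X) (c : ℝ) (P : X →L[ℝ] X),
      0 < c ∧ (∀ u : lp (fun _ : ℕ => ℝ) 1, c * ‖u‖ ≤ ‖f u‖) ∧
      (∀ y : X, P (P y) = P y) ∧ Set.range P = Set.range f) :
    ∃ K : Set X,
      K.Nonempty ∧ Bornology.IsBounded K ∧ IsClosed K ∧ Convex ℝ K ∧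
      K ⊆ Metric.closedBall (0 : X) 1 ∧
      (∃ R : X → X, Set.MapsTo R (Metric.closedBall (0 : X) 1) K ∧
        (∀ y ∈ K, R y = y) ∧
        ∃ L : ℝ, 0 ≤ L ∧ ∀ y ∈ Metric.closedBall (0 : X) 1,
          ∀ z ∈ Metric.closedBall (0 : X) 1, ‖R y - R z‖ ≤ L * ‖y - z‖) ∧
      (∃ F : X → X, Set.MapsTo F K K ∧ (∀ y ∈ K, F y ≠ y) ∧
        (∃ L : ℝ, 0 ≤ L ∧ ∀ n : ℕ, ∀ y ∈ K, ∀ z ∈ K,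
          ‖F^[n] y - F^[n] z‖ ≤ L * ‖y - z‖) ∧
        sInf ((fun y => ‖y - F y‖) '' K) = 0) :=
  statement10_general hl1
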